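/- arXiv:2311.01106 — 3 statements merged into one kernel-verified Lean document; each statement's English description precedes it below -/
import Mathlib

section
/- The asymmetric softmax function is maxima-preserving: for any u ∈ R^{K+1} and any index y* ∈ {1,...,K+1}, u_{y*} = max_y u_y if and only if ψ̃_{y*}(u) = max_y ψ̃_y(u). In particular, argmax_y ψ̃_y(u) = argmax_y u_y as sets. -/
/-- The asymmetric softmax function of Definition 2. -/
noncomputable def asoftmax (K : ℕ) (u : Fin (K + 1) → ℝ) (y : Fin (K + 1)) : ℝ :=
  if y = Fin.last K then
    Real.exp (u y) /
      ((∑ y' : Fin (K + 1), Real.exp (u y')) - ⨆ y' : Fin K, Real.exp (u y'.castSucc))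
  else Real.exp (u y) / ∑ y' : Fin K, Real.exp (u y'.castSucc)

/-!
Write `S` for the sum and `M` for the maximum of the `exp (u j)` over the first `K` coordinates,
and `D = S - M`, which is positive because `K > 1`. The first `K` outputs are `exp (u j) / S`, a
strictly increasing function of `u j`, and the last one is `a / (a + D)` with `a = exp (u (K+1))`,
again strictly increasing. Both functions take the value `M / S` at the block maximum
`m = max_{j ≤ K} u j`, so the last coordinate beats the block in `ψ̃` exactly when it beats it
in `u`.
-/

open Real

theorem forall_le_iff_of_isGreatest {ι α β : Type*} [Preorder α] [Preorder β] {v : ι → α}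
    {m : α} {f : α → β} (hm : IsGreatest (Set.range v) m) (hf : Monotone f) (b : β) :
    (∀ i, f (v i) ≤ b) ↔ f m ≤ b := by
  obtain ⟨⟨i, rfl⟩, hle⟩ := hm
  exact ⟨fun h => h i, fun h j => (hf (hle ⟨j, rfl⟩)).trans h⟩

theorem Fin.forall_le_iff_of_strictMono {α β : Type*} [LinearOrder α] [LinearOrder β] {n : ℕ}
    {u : Fin (n + 1) → α} {ψ : Fin (n + 1) → β} {f g : α → β} {m : α}
    (hf : StrictMono f) (hg : StrictMono g)
    (hm : IsGreatest (Set.range fun j : Fin n => u j.castSucc) m) (hfg : f m = g m)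
    (hψ : ∀ j : Fin n, ψ j.castSucc = f (u j.castSucc))
    (hψ_last : ψ (last n) = g (u (last n)))
    (y : Fin (n + 1)) :
    (∀ z, u z ≤ u y) ↔ (∀ z, ψ z ≤ ψ y) := by
  have hu_block (b : α) : (∀ j : Fin n, u j.castSucc ≤ b) ↔ m ≤ b :=
    forall_le_iff_of_isGreatest hm monotone_id b
  have hψ_block (b : β) : (∀ j : Fin n, ψ j.castSucc ≤ b) ↔ f m ≤ b := by
    simpa only [hψ] using forall_le_iff_of_isGreatest hm hf.monotone b
  simp only [Fin.forall_fin_succ' (P := fun z => u z ≤ u y),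
    Fin.forall_fin_succ' (P := fun z => ψ z ≤ ψ y), hu_block, hψ_block]
  induction y using Fin.lastCases with
  | last => simp only [hψ_last, hfg, hg.le_iff_le, le_refl, and_true]
  | cast i =>
    rw [hψ i, hψ_last, hf.le_iff_le]
    refine and_congr_right fun hmi => ?_
    have hi : u i.castSucc = m := le_antisymm (hm.2 ⟨i, rfl⟩) hmi
    rw [hi, hfg, hg.le_iff_le]

theorem ciSup_lt_sum_of_pos {ι : Type*} [Fintype ι] [Nontrivial ι] {f : ι → ℝ}
    (hf : ∀ i, 0 < f i) : ⨆ i, f i < ∑ i, f i := by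
  obtain ⟨i, hi⟩ := exists_eq_ciSup_of_finite (f := f)
  obtain ⟨j, hji⟩ := exists_ne i
  rw [← hi]
  exact Finset.single_lt_sum hji (Finset.mem_univ i) (Finset.mem_univ j) (hf j)
    fun k _ _ => (hf k).le

theorem strictMono_exp_div_exp_add {D : ℝ} (hD : 0 < D) :
    StrictMono fun x => exp x / (exp x + D) := by
  intro x y hxy
  have hexp := exp_lt_exp.mpr hxy
  rw [div_lt_div_iff₀ (by positivity) (by positivity)]
  nlinarith

theorem asoftmax_castSucc (K : ℕ) (u : Fin (K + 1) → ℝ) (j : Fin K) :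
    asoftmax K u j.castSucc = exp (u j.castSucc) / ∑ j' : Fin K, exp (u j'.castSucc) := by
  rw [asoftmax, if_neg (Fin.castSucc_lt_last j).ne]

theorem asoftmax_last (K : ℕ) (u : Fin (K + 1) → ℝ) :
    asoftmax K u (Fin.last K) = exp (u (Fin.last K)) / (exp (u (Fin.last K)) +
      ((∑ j : Fin K, exp (u j.castSucc)) - ⨆ j : Fin K, exp (u j.castSucc))) := by
  rw [asoftmax, if_pos rfl, Fin.sum_univ_castSucc]
  ring_nf

/-- the asymmetric softmax is maxima-preserving: a coordinate
attains the maximum of `u` iff it attains the maximum of `asoftmax K u`.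
In particular the argmax sets coincide. -/
theorem asoftmax_maxima_preserving (K : ℕ) (hK : 1 < K)
    (u : Fin (K + 1) → ℝ) (ystar : Fin (K + 1)) :
    ((∀ y : Fin (K + 1), u y ≤ u ystar) ↔
      (∀ y : Fin (K + 1), asoftmax K u y ≤ asoftmax K u ystar)) ∧
    {y : Fin (K + 1) | ∀ y' : Fin (K + 1), u y' ≤ u y} =
      {y : Fin (K + 1) | ∀ y' : Fin (K + 1), asoftmax K u y' ≤ asoftmax K u y} := by
  have : Nontrivial (Fin K) := Fin.nontrivial_iff_two_le.mpr hK
  set S := ∑ j : Fin K, exp (u j.castSucc)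
  set M := ⨆ j : Fin K, exp (u j.castSucc)
  obtain ⟨j₀, hj₀⟩ : ∃ j₀ : Fin K, exp (u j₀.castSucc) = M :=
    exists_eq_ciSup_of_finite
  have hm : IsGreatest (Set.range fun j : Fin K => u j.castSucc) (u j₀.castSucc) := by
    refine ⟨⟨j₀, rfl⟩, ?_⟩
    rintro _ ⟨j, rfl⟩
    rw [← exp_le_exp, hj₀]
    exact le_ciSup (f := fun j : Fin K => exp (u j.castSucc)) (Set.finite_range _).bddAbove j
  have hS : 0 < S := Finset.sum_pos (fun j _ => exp_pos _) Finset.univ_nonempty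
  have hD : 0 < S - M := sub_pos.mpr (ciSup_lt_sum_of_pos fun j => exp_pos _)
  have key (y : Fin (K + 1)) :
      (∀ z, u z ≤ u y) ↔ (∀ z, asoftmax K u z ≤ asoftmax K u y) :=
    Fin.forall_le_iff_of_strictMono (f := fun x => exp x / S)
      (fun x y hxy => div_lt_div_of_pos_right (exp_lt_exp.mpr hxy) hS)
      (strictMono_exp_div_exp_add hD) hm (by simp only [hj₀, M, add_sub_cancel])
      (asoftmax_castSucc K u) (asoftmax_last K u) y
  exact ⟨key ystar, Set.ext key⟩
end

section
/- Let y1 = argmax_{y∈{1,...,K}} u_y. If u_{K+1} > u_{y1}, then ψ̃_{K+1}(u) > ψ̃_{y1}(u); and if u_{y1} ≥ u_{K+1}, then ψ̃_{y1}(u) ≥ ψ̃_{K+1}(u). -/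
section CrossMultiplication

variable {a b c : ℝ}

theorem div_lt_div_sub_add (ha : 0 < a) (hab : a < b) (hac : a < c) :
    a / b < c / (b - a + c) := by
  rw [div_lt_div_iff₀ (by linarith) (by linarith)]
  nlinarith [mul_pos (sub_pos.2 hac) (sub_pos.2 hab)]

theorem div_sub_add_le_div (hc : 0 < c) (hab : a ≤ b) (hca : c ≤ a) :
    c / (b - a + c) ≤ a / b := by
  rw [div_le_div_iff₀ (by linarith) (by linarith)]
  nlinarith [mul_nonneg (sub_nonneg.2 hca) (sub_nonneg.2 hab)]

end CrossMultiplication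

namespace asoftmax

variable {K : ℕ} (u : Fin (K + 1) → ℝ)

theorem apply_castSucc (y : Fin K) :
    asoftmax K u y.castSucc = Real.exp (u y.castSucc) / ∑ y' : Fin K, Real.exp (u y'.castSucc) :=
  if_neg (Fin.castSucc_lt_last y).ne

theorem apply_last_of_isMax {y1 : Fin K} (hy1 : ∀ y : Fin K, u y.castSucc ≤ u y1.castSucc) :
    asoftmax K u (Fin.last K) = Real.exp (u (Fin.last K)) /
      ((∑ y' : Fin K, Real.exp (u y'.castSucc)) - Real.exp (u y1.castSucc) +
        Real.exp (u (Fin.last K))) := by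
  have : Nonempty (Fin K) := ⟨y1⟩
  have hsup : ⨆ y' : Fin K, Real.exp (u y'.castSucc) = Real.exp (u y1.castSucc) :=
    le_antisymm (ciSup_le fun y => Real.exp_le_exp.2 (hy1 y))
      (le_ciSup (Set.finite_range fun y : Fin K => Real.exp (u y.castSucc)).bddAbove y1)
  rw [asoftmax, if_pos rfl, Fin.sum_univ_castSucc, hsup]
  ring

end asoftmax

theorem exp_castSucc_le_sum_exp {K : ℕ} (u : Fin (K + 1) → ℝ) (y : Fin K) :
    Real.exp (u y.castSucc) ≤ ∑ y' : Fin K, Real.exp (u y'.castSucc) :=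
  Finset.single_le_sum (f := fun y' : Fin K => Real.exp (u y'.castSucc))
    (fun _ _ => (Real.exp_pos _).le) (Finset.mem_univ y)

theorem exp_castSucc_lt_sum_exp {K : ℕ} (hK : 1 < K) (u : Fin (K + 1) → ℝ) (y : Fin K) :
    Real.exp (u y.castSucc) < ∑ y' : Fin K, Real.exp (u y'.castSucc) := by
  obtain ⟨j, hj⟩ := Fintype.exists_ne_of_one_lt_card (by simpa using hK) y
  exact Finset.single_lt_sum (f := fun y' : Fin K => Real.exp (u y'.castSucc)) hj
    (Finset.mem_univ _) (Finset.mem_univ _) (Real.exp_pos _) fun _ _ _ => (Real.exp_pos _).le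

/-- comparison of the last coordinate of the asymmetric softmax
with its largest among the first K coordinates. -/
theorem asoftmax_last_vs_argmax (K : ℕ) (hK : 1 < K)
    (u : Fin (K + 1) → ℝ) (y1 : Fin K)
    (hy1 : ∀ y : Fin K, u y.castSucc ≤ u y1.castSucc) :
    (u (Fin.last K) > u y1.castSucc →
        asoftmax K u (Fin.last K) > asoftmax K u y1.castSucc) ∧
    (u y1.castSucc ≥ u (Fin.last K) →
        asoftmax K u y1.castSucc ≥ asoftmax K u (Fin.last K)) := by
  rw [asoftmax.apply_last_of_isMax u hy1, asoftmax.apply_castSucc]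
  refine ⟨fun hlast => ?_, fun hy1_ge => ?_⟩
  · exact div_lt_div_sub_add (Real.exp_pos _) (exp_castSucc_lt_sum_exp hK u y1)
      (Real.exp_lt_exp.2 hlast)
  · exact div_sub_add_le_div (Real.exp_pos _) (exp_castSucc_le_sum_exp u y1)
      (Real.exp_le_exp.2 hy1_ge)
end

section
/- Let η ∈ Δ^K, c ∈ [0,1], and let η̂ ∈ Δ^K, ĉ ∈ [0,1] be estimates. Suppose the decision rule defers when ĉ > max_y η̂_y and otherwise predicts argmax_y η̂_y, while the Bayes rule defers when c > max_y η_y and otherwise predicts argmax_y η_y. Then the pointwise 0-1-deferral regret, which equals max(max_y η_y, c) minus the accuracy of the chosen action, is at most ‖η − η̂‖_1 + |c − ĉ|. -/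
/-!
Deferring is just one more action, with true accuracy `c` and estimated accuracy `ĉ`; the plug-in
rule is then an argmax of the estimated accuracies over the `K + 1` actions. For any plug-in
argmax `a` of `g` and any competitor `b`,
`f b - f a = (f b - g b) + (g b - g a) + (g a - f a) ≤ |f b - g b| + |f a - g a|`,
which is at most the ℓ¹ distance between `f` and `g` on the extended action set.
-/

open Finset

theorem sub_le_sum_abs_sub_of_forall_le {ι : Type*} [Fintype ι] (f g : ι → ℝ) {a : ι}
    (ha : ∀ y, g y ≤ g a) (b : ι) : f b - f a ≤ ∑ y, |f y - g y| := by
  have hnonneg : ∀ y ∈ univ, 0 ≤ |f y - g y| := fun y _ => abs_nonneg _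
  by_cases hba : b = a
  · rw [hba, sub_self]
    exact sum_nonneg hnonneg
  · calc f b - f a ≤ |f b - g b| + |f a - g a| := by
          linarith [ha b, le_abs_self (f b - g b), neg_abs_le (f a - g a)]
      _ ≤ ∑ y, |f y - g y| := add_le_sum hnonneg (mem_univ b) (mem_univ a) hba

theorem ciSup_eq_of_forall_le {ι α : Type*} [ConditionallyCompleteLattice α] (f : ι → α) {a : ι} (ha : ∀ y, f y ≤ f a) :
    ⨆ y, f y = f a :=
  haveI : Nonempty ι := ⟨a⟩
  IsLUB.ciSup_eq (IsGreatest.isLUB ⟨⟨a, rfl⟩, Set.forall_mem_range.2 ha⟩)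

theorem max_ciSup_sub_plugin_deferral_le {ι : Type*} [Fintype ι] (η ηhat : ι → ℝ) (c chat : ℝ)
    {yhat : ι} (hyhat : ∀ y, ηhat y ≤ ηhat yhat) :
    max (⨆ y, η y) c - (if chat > ηhat yhat then c else η yhat) ≤
      (∑ y, |η y - ηhat y|) + |c - chat| := by
  let acc : Option ι → ℝ := fun o => o.elim c η
  let accHat : Option ι → ℝ := fun o => o.elim chat ηhat
  let choice : Option ι := if chat > ηhat yhat then none else some yhat
  have hchoice : ∀ o, accHat o ≤ accHat choice := by
    by_cases h : chat > ηhat yhat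
    · rintro (_ | y) <;> simp only [accHat, choice, if_pos h, Option.elim]
      exacts [le_rfl, (hyhat y).trans h.le]
    · rintro (_ | y) <;> simp only [accHat, choice, if_neg h, Option.elim]
      exacts [not_lt.1 h, hyhat y]
  have hregret : ∀ o, acc o - acc choice ≤ (∑ y, |η y - ηhat y|) + |c - chat| := by
    intro o
    have h := sub_le_sum_abs_sub_of_forall_le acc accHat hchoice o
    rwa [Fintype.sum_option, add_comm] at h
  have hchosen : (if chat > ηhat yhat then c else η yhat) = acc choice := by
    by_cases h : chat > ηhat yhat <;> simp [acc, choice, h]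
  have : Nonempty ι := ⟨yhat⟩
  rw [hchosen, sub_le_iff_le_add]
  exact max_le (ciSup_le fun y => sub_le_iff_le_add.1 (hregret (some y)))
    (sub_le_iff_le_add.1 (hregret none))

theorem plugin_deferral_regret_bound_general (K : ℕ)
    (η ηhat : Fin K → ℝ) (c chat : ℝ)
    (yhat : Fin K) (hyhat : ∀ y, ηhat y ≤ ηhat yhat) :
    max (⨆ y, η y) c -
        (if chat > ⨆ y, ηhat y then c else η yhat) ≤
      (∑ y, |η y - ηhat y|) + |c - chat| := by
  rw [ciSup_eq_of_forall_le ηhat hyhat]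
  exact max_ciSup_sub_plugin_deferral_le η ηhat c chat hyhat

/-- the pointwise 0-1-deferral regret of the plug-in rule based on
estimates (η̂, ĉ) is bounded by the ℓ1 estimation error plus the expert
accuracy estimation error. The chosen action defers (getting accuracy c) when
ĉ > max_y η̂_y and otherwise predicts ŷ ∈ argmax_y η̂_y (getting accuracy η ŷ). -/
theorem plugin_deferral_regret_bound (K : ℕ) (hK : 0 < K)
    (η ηhat : Fin K → ℝ) (c chat : ℝ)
    (hη0 : ∀ y, 0 ≤ η y) (hη1 : ∑ y, η y = 1)
    (hηhat0 : ∀ y, 0 ≤ ηhat y) (hηhat1 : ∑ y, ηhat y = 1)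
    (hc : c ∈ Set.Icc (0 : ℝ) 1) (hchat : chat ∈ Set.Icc (0 : ℝ) 1)
    (yhat : Fin K) (hyhat : ∀ y, ηhat y ≤ ηhat yhat) :
    max (⨆ y, η y) c -
        (if chat > ⨆ y, ηhat y then c else η yhat) ≤
      (∑ y, |η y - ηhat y|) + |c - chat| :=
  plugin_deferral_regret_bound_general K η ηhat c chat yhat hyhat
end
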